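/- Consider the 6-dimensional constant-coefficient system dθ⁰ = θ¹∧θ⁴ − 3θ²∧θ³, dθ¹ = ½θ⁰∧θ¹ − 3θ¹∧θ⁸, dθ² = ½θ⁰∧θ² − θ²∧θ⁸, dθ³ = −½θ⁰∧θ³ + θ³∧θ⁸, dθ⁴ = −½θ⁰∧θ⁴ + 3θ⁴∧θ⁸, dθ⁸ = −½θ¹∧θ⁴ + ½θ²∧θ³ (on a 6-dimensional space with coframe θ⁰,θ¹,θ²,θ³,θ⁴,θ⁸). Then d²θⁱ = 0 for all six forms, so the system defines a 6-dimensional Lie algebra; moreover this Lie algebra is isomorphic to sl(2,ℝ) ⊕ sl(2,ℝ). -/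

import Mathlib

/-- The bracket on `ℝ⁶` (with coframe `θ⁰,θ¹,θ²,θ³,θ⁴,θ⁸`, indexed `0,…,4,5`) dual to the
constant-coefficient structure equations
`dθ⁰ = θ¹∧θ⁴ − 3θ²∧θ³`, `dθ¹ = ½θ⁰∧θ¹ − 3θ¹∧θ⁸`, `dθ² = ½θ⁰∧θ² − θ²∧θ⁸`,
`dθ³ = −½θ⁰∧θ³ + θ³∧θ⁸`, `dθ⁴ = −½θ⁰∧θ⁴ + 3θ⁴∧θ⁸`, `dθ⁸ = −½θ¹∧θ⁴ + ½θ²∧θ³`,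
via `[eᵢ,eⱼ] = −Σₖ cᵏᵢⱼ eₖ`. -/
noncomputable def brB (u v : Fin 6 → ℝ) : Fin 6 → ℝ :=
  ![-(u 1 * v 4 - u 4 * v 1) + 3 * (u 2 * v 3 - u 3 * v 2),
    -(1 / 2) * (u 0 * v 1 - u 1 * v 0) + 3 * (u 1 * v 5 - u 5 * v 1),
    -(1 / 2) * (u 0 * v 2 - u 2 * v 0) + (u 2 * v 5 - u 5 * v 2),
    (1 / 2) * (u 0 * v 3 - u 3 * v 0) - (u 3 * v 5 - u 5 * v 3),
    (1 / 2) * (u 0 * v 4 - u 4 * v 0) - 3 * (u 4 * v 5 - u 5 * v 4),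
    (1 / 2) * (u 1 * v 4 - u 4 * v 1) - (1 / 2) * (u 2 * v 3 - u 3 * v 2)]

/-!
The spans of `e₅ − 2e₀, e₄, e₁` and of `6e₀ − e₅, e₃, e₂` are commuting ideals, and sending
`a(e₅ − 2e₀) + b e₄ − 2c e₁` resp. `a(6e₀ − e₅) + b e₃ − 2c e₂` to `!![a, b; c, -a]` identifies
each of them with `sl(2,ℝ)`. This linear isomorphism `ℝ⁶ ≃ sl(2,ℝ) × sl(2,ℝ)` carries `brB` to the
commutator bracket, so antisymmetry and the Jacobi identity (i.e. `d² = 0`) are inherited from the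
Lie algebra `sl(2,ℝ) × sl(2,ℝ)` through injectivity.
-/

section Transport

variable {M L F : Type*} [AddCommGroup M] [LieRing L] [FunLike F M L] [AddMonoidHomClass F M L]

theorem Function.Injective.bracket_eq_neg_swap {f : F} (hf : Function.Injective f)
    {br : M → M → M} (hbr : ∀ u v, f (br u v) = ⁅f u, f v⁆) (u v : M) :
    br u v = -br v u :=
  hf <| by rw [map_neg, hbr, hbr, lie_skew]

theorem Function.Injective.bracket_jacobi {f : F} (hf : Function.Injective f)
    {br : M → M → M} (hbr : ∀ u v, f (br u v) = ⁅f u, f v⁆) (u v w : M) :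
    br u (br v w) + br v (br w u) + br w (br u v) = 0 :=
  hf <| by simp only [map_add, hbr, map_zero, lie_jacobi]

end Transport

namespace LieAlgebra.SpecialLinear

variable {R : Type*} [CommRing R]

def slTwoMk (a b c : R) : sl (Fin 2) R :=
  ⟨!![a, b; c, -a], by
    show Matrix.trace !![a, b; c, -a] = 0
    simp [Matrix.trace_fin_two]⟩

theorem sl_fin_two_apply_one_one (A : sl (Fin 2) R) : A.1 1 1 = -A.1 0 0 := by
  have hA : Matrix.trace A.1 = 0 := A.2
  rw [Matrix.trace_fin_two] at hA
  exact eq_neg_of_add_eq_zero_right hA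

theorem slTwoMk_eq_iff {a b c : R} {A : sl (Fin 2) R} :
    slTwoMk a b c = A ↔ a = A.1 0 0 ∧ b = A.1 0 1 ∧ c = A.1 1 0 := by
  rw [Subtype.ext_iff, ← Matrix.ext_iff]
  simp [slTwoMk, Fin.forall_fin_two, sl_fin_two_apply_one_one]
  tauto

theorem slTwoMk_add (a b c a' b' c' : R) :
    slTwoMk a b c + slTwoMk a' b' c' = slTwoMk (a + a') (b + b') (c + c') := by
  ext i j
  fin_cases i <;> fin_cases j <;> simp [slTwoMk]; ring

theorem slTwoMk_smul (r a b c : R) : r • slTwoMk a b c = slTwoMk (r * a) (r * b) (r * c) := by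
  ext i j
  fin_cases i <;> fin_cases j <;> simp [slTwoMk]

theorem lie_slTwoMk (a b c a' b' c' : R) :
    ⁅slTwoMk a b c, slTwoMk a' b' c'⁆ =
      slTwoMk (b * c' - c * b') (2 * (a * b' - b * a')) (2 * (c * a' - a * c')) := by
  apply Subtype.ext
  rw [sl_bracket]
  ext i j
  fin_cases i <;> fin_cases j <;> simp [slTwoMk] <;> ring

end LieAlgebra.SpecialLinear

open LieAlgebra.SpecialLinear

noncomputable def brBEquiv : (Fin 6 → ℝ) ≃ₗ[ℝ] sl (Fin 2) ℝ × sl (Fin 2) ℝ where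
  toFun u := (slTwoMk (u 0 / 4 + 3 * u 5 / 2) (u 4) (-u 1 / 2),
    slTwoMk (u 0 / 4 + u 5 / 2) (u 3) (-u 2 / 2))
  map_add' u v := by
    simp only [Pi.add_apply, Prod.mk_add_mk, slTwoMk_add]
    congr 2 <;> ring
  map_smul' r u := by
    simp only [Pi.smul_apply, smul_eq_mul, RingHom.id_apply, Prod.smul_mk, slTwoMk_smul]
    congr 2 <;> ring
  invFun p := ![6 * p.2.1 0 0 - 2 * p.1.1 0 0, -2 * p.1.1 1 0, -2 * p.2.1 1 0,
    p.2.1 0 1, p.1.1 0 1, p.1.1 0 0 - p.2.1 0 0]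
  left_inv u := by
    ext i
    fin_cases i <;> simp [slTwoMk] <;> ring
  right_inv p := by
    refine Prod.ext (slTwoMk_eq_iff.2 ?_) (slTwoMk_eq_iff.2 ?_) <;>
      refine ⟨?_, ?_, ?_⟩ <;> simp <;> ring

theorem brBEquiv_brB (u v : Fin 6 → ℝ) : brBEquiv (brB u v) = ⁅brBEquiv u, brBEquiv v⁆ := by
  simp only [brBEquiv, LinearEquiv.coe_mk, LinearMap.coe_mk, AddHom.coe_mk,
    LieAlgebra.Prod.bracket_apply, lie_slTwoMk]
  congr 2 <;> simp [brB] <;> ring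

/-- The system is closed (`d² = 0`), i.e. the dual bracket is antisymmetric and satisfies
the Jacobi identity, defining a 6-dimensional Lie algebra; moreover this Lie algebra is
isomorphic to `sl(2,ℝ) ⊕ sl(2,ℝ)`. -/
theorem six_dimensional_model_is_sl2_oplus_sl2 :
    (∀ u v : Fin 6 → ℝ, brB u v = -brB v u) ∧
    (∀ u v w : Fin 6 → ℝ, brB u (brB v w) + brB v (brB w u) + brB w (brB u v) = 0) ∧
    ∃ f : (Fin 6 → ℝ) ≃ₗ[ℝ]
        (LieAlgebra.SpecialLinear.sl (Fin 2) ℝ × LieAlgebra.SpecialLinear.sl (Fin 2) ℝ),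
      ∀ u v : Fin 6 → ℝ,
        (f (brB u v)).1 = ⁅(f u).1, (f v).1⁆ ∧ (f (brB u v)).2 = ⁅(f u).2, (f v).2⁆ := by
  exact ⟨brBEquiv.injective.bracket_eq_neg_swap brBEquiv_brB,
    brBEquiv.injective.bracket_jacobi brBEquiv_brB,
    brBEquiv, fun u v => by simp [brBEquiv_brB]⟩
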